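/- arXiv:2102.13194 — 2 statements merged into one kernel-verified Lean document; each statement's English description precedes it below -/
import Mathlib

section
/- For h(x,y) = α‖x−y‖ on Y×Y, if ‖x−y‖ > 2α then Prox_h(x,y) = (x − (α/‖x−y‖)(x−y), y − (α/‖x−y‖)(y−x)). -/
open RealInnerProductSpace

/-- For h(x,y)=α‖x−y‖, if ‖x−y‖ > 2α then
Prox_h(x,y) = (x − (α/‖x−y‖)(x−y), y − (α/‖x−y‖)(y−x)). -/
theorem stmt_4 {Y : Type*} [NormedAddCommGroup Y] [InnerProductSpace ℝ Y]
    (α : ℝ) (hα : 0 < α) (x y : Y) (hxy : 2 * α < ‖x - y‖)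
    (F : Y → Y → ℝ)
    (hF : ∀ u v, F u v = α * ‖u - v‖
        + (1/2) * (‖u - x‖ ^ 2 + ‖v - y‖ ^ 2))
    (p q : Y)
    (hp : p = x - (α / ‖x - y‖) • (x - y))
    (hq : q = y - (α / ‖x - y‖) • (y - x)) :
    (∀ u v : Y, F p q ≤ F u v) ∧
      (∀ u v : Y, F u v ≤ F p q → u = p ∧ v = q) := by
  have hn0 : (0:ℝ) < ‖x - y‖ := lt_trans (by positivity) hxy
  set n : ℝ := ‖x - y‖ with hn
  set t : ℝ := α / n with ht
  have htn : t * n = α := div_mul_cancel₀ α hn0.ne'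
  have ht0 : 0 < t := div_pos hα hn0
  have h2t : 2 * t < 1 := by
    rw [ht, mul_div_assoc']
    exact (div_lt_one hn0).mpr hxy
  clear_value t n
  have hpq : p - q = (1 - 2*t) • (x - y) := by rw [hp, hq]; module
  have hpx : p - x = -(t • (x - y)) := by rw [hp]; module
  have hqy : q - y = t • (x - y) := by rw [hq]; module
  have habs : |t| = t := abs_of_pos ht0
  have hFpq : F p q = α * n - α ^ 2 := by
    rw [hF, hpq, hpx, hqy, norm_neg, norm_smul, norm_smul]
    simp only [Real.norm_eq_abs, habs, abs_of_pos (show (0:ℝ) < 1 - 2*t by linarith)]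
    rw [← hn]
    linear_combination (t*n - α) * htn
  have hself : ⟪x - y, x - y⟫ = n ^ 2 := by rw [hn]; exact real_inner_self_eq_norm_sq _
  have key : ∀ u v : Y, F p q + (1/2) * ‖u - p‖^2 + (1/2) * ‖v - q‖^2 ≤ F u v := by
    intro u v
    have e1 : u - p = (u - x) + t • (x - y) := by rw [hp]; module
    have e2 : v - q = (v - y) - t • (x - y) := by rw [hq]; module
    have h1 : ‖u - p‖^2 = ‖u - x‖^2 + 2*t*⟪u - x, x - y⟫ + t^2*n^2 := by
      rw [e1, norm_add_sq_real, real_inner_smul_right, norm_smul, Real.norm_eq_abs, habs, ← hn]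
      ring
    have h2 : ‖v - q‖^2 = ‖v - y‖^2 - 2*t*⟪v - y, x - y⟫ + t^2*n^2 := by
      rw [e2, norm_sub_sq_real, real_inner_smul_right, norm_smul, Real.norm_eq_abs, habs, ← hn]
      ring
    have h3 : t*⟪u - x, x - y⟫ - t*⟪v - y, x - y⟫
        = t*⟪u - v, x - y⟫ - α*n := by
      have hsub : ⟪u - x, x - y⟫ - ⟪v - y, x - y⟫
          = ⟪u - v, x - y⟫ - ⟪x - y, x - y⟫ := by
        simp only [inner_sub_left]; ring
      rw [hself] at hsub
      linear_combination t * hsub - n * htn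
    have h4 : ⟪u - v, x - y⟫ ≤ ‖u - v‖ * n := by rw [hn]; exact real_inner_le_norm _ _
    have h5 : t * ⟪u - v, x - y⟫ ≤ α * ‖u - v‖ := by
      calc t * ⟪u - v, x - y⟫ ≤ t * (‖u - v‖ * n) :=
            mul_le_mul_of_nonneg_left h4 ht0.le
        _ = α * ‖u - v‖ := by rw [← htn]; ring
    have htn2 : t^2 * n^2 = α^2 := by rw [← htn]; ring
    rw [hF u v, hFpq, h1, h2]
    nlinarith [h3, h5, htn2]
  constructor
  · intro u v
    have hk := key u v
    have h1 := sq_nonneg ‖u - p‖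
    have h2 := sq_nonneg ‖v - q‖
    linarith
  · intro u v huv
    have hk := key u v
    have h1 := sq_nonneg ‖u - p‖
    have h2 := sq_nonneg ‖v - q‖
    have hu : ‖u - p‖^2 = 0 := le_antisymm (by linarith) h1
    have hv : ‖v - q‖^2 = 0 := le_antisymm (by linarith) h2
    rw [pow_eq_zero_iff (two_ne_zero), norm_eq_zero, sub_eq_zero] at hu hv
    exact ⟨hu, hv⟩
end

section
/- For h(x,y) = α‖x−y‖ on Y×Y, the proximal mapping admits the unified formula Prox_h(x,y) = (x,y) − (1/max{2, ‖x−y‖/α})·(x−y, y−x). -/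
open RealInnerProductSpace

/-- Unified prox formula for h(x,y)=α‖x−y‖:
Prox_h(x,y) = (x,y) − (1/max{2, ‖x−y‖/α})(x−y, y−x). -/
theorem stmt_5 {Y : Type*} [NormedAddCommGroup Y] [InnerProductSpace ℝ Y]
    (α : ℝ) (hα : 0 < α) (x y : Y)
    (F : Y → Y → ℝ)
    (hF : ∀ u v, F u v = α * ‖u - v‖
        + (1/2) * (‖u - x‖ ^ 2 + ‖v - y‖ ^ 2))
    (p q : Y)
    (hp : p = x - (max 2 (‖x - y‖ / α))⁻¹ • (x - y))
    (hq : q = y - (max 2 (‖x - y‖ / α))⁻¹ • (y - x)) :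
    (∀ u v : Y, F p q ≤ F u v) ∧
      (∀ u v : Y, F u v ≤ F p q → u = p ∧ v = q) := by
  set z : Y := x - y with hzdef
  set m : ℝ := max 2 (‖x - y‖ / α) with hmdef
  have hm2 : (2:ℝ) ≤ m := le_max_left _ _
  have hmz : ‖z‖ / α ≤ m := le_max_right _ _
  have hm0 : (0:ℝ) < m := lt_of_lt_of_le two_pos hm2
  set t : ℝ := m⁻¹ with htdef
  have ht0 : 0 < t := inv_pos.mpr hm0
  have htm : t * m = 1 := inv_mul_cancel₀ (ne_of_gt hm0)
  have ht2 : t ≤ 1/2 := by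
    rw [htdef]
    rw [show (1:ℝ)/2 = 2⁻¹ by norm_num]
    exact inv_anti₀ two_pos hm2
  have hzm : ‖z‖ ≤ m * α := by
    have := (div_le_iff₀ hα).mp hmz
    linarith
  have htz : t * ‖z‖ ≤ α := by
    have h1 : t * ‖z‖ ≤ t * (m * α) :=
      mul_le_mul_of_nonneg_left hzm (le_of_lt ht0)
    have : t * (m * α) = α := by rw [← mul_assoc, htm, one_mul]
    linarith
  -- key: (t‖z‖ − α)(1 − 2t) = 0
  have hkey : (t * ‖z‖ - α) * (1 - 2 * t) = 0 := by
    by_cases hc : ‖z‖ / α ≤ 2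
    · have hmeq : m = 2 := max_eq_left hc
      have : t = 1/2 := by rw [htdef, hmeq]; norm_num
      rw [this]; ring
    · push_neg at hc
      have hmeq : m = ‖z‖ / α := max_eq_right (le_of_lt hc)
      have hzpos : 0 < ‖z‖ := by
        have hne : ‖z‖ ≠ 0 := by
          intro h0
          rw [h0, zero_div] at hc
          linarith
        exact lt_of_le_of_ne (norm_nonneg z) (Ne.symm hne)
      have : t * ‖z‖ = α := by
        rw [htdef, hmeq]
        field_simp
      rw [this]; ring
  have hpq : p - q = (1 - 2 * t) • z := by
    rw [hp, hq, hzdef]; module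
  set g : Y := t • z with hgdef
  have hpx : p - x = -g := by rw [hp, hgdef, hzdef]; module
  have hqy : q - y = g := by rw [hq, hgdef, hzdef]; module
  have hgpq : ⟪g, p - q⟫ = α * ‖p - q‖ := by
    rw [hpq, hgdef, real_inner_smul_left, real_inner_smul_right,
      real_inner_self_eq_norm_sq, norm_smul, Real.norm_eq_abs,
      abs_of_nonneg (by linarith : (0:ℝ) ≤ 1 - 2 * t)]
    nlinarith [hkey]
  have hgw : ∀ w : Y, ⟪g, w⟫ ≤ α * ‖w‖ := by
    intro w
    have h1 : ⟪g, w⟫ ≤ ‖g‖ * ‖w‖ := real_inner_le_norm _ _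
    have h2 : ‖g‖ = t * ‖z‖ := by
      rw [hgdef, norm_smul, Real.norm_eq_abs, abs_of_pos ht0]
    have h3 : ‖g‖ * ‖w‖ ≤ α * ‖w‖ := by
      apply mul_le_mul_of_nonneg_right _ (norm_nonneg w)
      rw [h2]; exact htz
    linarith
  -- main identity
  have hid : ∀ u v : Y, F u v = F p q + (α * ‖u - v‖ - ⟪g, u - v⟫)
      + (1/2) * ‖u - p‖ ^ 2 + (1/2) * ‖v - q‖ ^ 2 := by
    intro u v
    rw [hF, hF]
    have e1 : ‖u - x‖ ^ 2 = ‖p - x‖ ^ 2 + 2 * ⟪p - x, u - p⟫ + ‖u - p‖ ^ 2 := by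
      have : u - x = (p - x) + (u - p) := by abel
      rw [this, norm_add_sq_real]
    have e2 : ‖v - y‖ ^ 2 = ‖q - y‖ ^ 2 + 2 * ⟪q - y, v - q⟫ + ‖v - q‖ ^ 2 := by
      have : v - y = (q - y) + (v - q) := by abel
      rw [this, norm_add_sq_real]
    have e3 : ⟪p - x, u - p⟫ = -⟪g, u - p⟫ := by
      rw [hpx, inner_neg_left]
    have e4 : ⟪q - y, v - q⟫ = ⟪g, v - q⟫ := by rw [hqy]
    have e5 : ⟪g, u - v⟫ = ⟪g, u - p⟫ - ⟪g, v - q⟫ + ⟪g, p - q⟫ := by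
      rw [inner_sub_right, inner_sub_right, inner_sub_right, inner_sub_right]
      ring
    rw [e1, e2, e3, e4, e5, hgpq]
    ring
  have hA : ∀ u v : Y, 0 ≤ α * ‖u - v‖ - ⟪g, u - v⟫ := by
    intro u v; have := hgw (u - v); linarith
  constructor
  · intro u v
    have := hid u v
    have h1 := hA u v
    have h2 : (0:ℝ) ≤ (1/2) * ‖u - p‖ ^ 2 := by positivity
    have h3 : (0:ℝ) ≤ (1/2) * ‖v - q‖ ^ 2 := by positivity
    linarith
  · intro u v hle
    have := hid u v
    have h1 := hA u v
    have h2 : (0:ℝ) ≤ ‖u - p‖ ^ 2 := by positivity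
    have h3 : (0:ℝ) ≤ ‖v - q‖ ^ 2 := by positivity
    have hu : ‖u - p‖ ^ 2 = 0 := by
      have : ‖u - p‖ ^ 2 ≤ 0 := by linarith
      linarith
    have hv : ‖v - q‖ ^ 2 = 0 := by
      have : ‖v - q‖ ^ 2 ≤ 0 := by linarith
      linarith
    constructor
    · have := pow_eq_zero_iff (n := 2) (by norm_num) |>.mp hu
      rwa [norm_eq_zero, sub_eq_zero] at this
    · have := pow_eq_zero_iff (n := 2) (by norm_num) |>.mp hv
      rwa [norm_eq_zero, sub_eq_zero] at this
end
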